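/- If G is a bistable bipartite graph with at least 4 vertices, then the intersection of all perfect matchings of G (as edge sets) is empty. -/

import Mathlib

open SimpleGraph

/-- A stable (independent) set of vertices: pairwise nonadjacent. -/
def IsStableSet {V : Type*} (G : SimpleGraph V) (S : Set V) : Prop :=
  S.Pairwise fun u v => ¬ G.Adj u v

/-- The stability number `α(G)`: maximum cardinality of a stable set. -/
noncomputable def stabNum {V : Type*} (G : SimpleGraph V) : ℕ :=
  sSup {k | ∃ S : Set V, IsStableSet G S ∧ S.ncard = k}

/-- A maximum stable set. -/
def IsMaxStableSet {V : Type*} (G : SimpleGraph V) (S : Set V) : Prop :=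
  IsStableSet G S ∧ S.ncard = stabNum G

/-- `G` is α⁺-stable: adding any edge between nonadjacent vertices keeps α. -/
def AlphaPlusStable {V : Type*} (G : SimpleGraph V) : Prop :=
  ∀ x y : V, x ≠ y → ¬ G.Adj x y →
    stabNum (G ⊔ SimpleGraph.fromEdgeSet {s(x, y)}) = stabNum G

/-- `G` is α⁻-stable: deleting any edge keeps α. -/
def AlphaMinusStable {V : Type*} (G : SimpleGraph V) : Prop :=
  ∀ e ∈ G.edgeSet, stabNum (G.deleteEdges {e}) = stabNum G

/-- `G` is α-stable: both α⁺-stable and α⁻-stable. -/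
def AlphaStable {V : Type*} (G : SimpleGraph V) : Prop :=
  AlphaPlusStable G ∧ AlphaMinusStable G

/-- `{A, B}` is a bipartition of `G`. -/
def IsBipartition {V : Type*} (G : SimpleGraph V) (A B : Set V) : Prop :=
  Disjoint A B ∧ A ∪ B = Set.univ ∧
    ∀ ⦃x y⦄, G.Adj x y → (x ∈ A ∧ y ∈ B) ∨ (x ∈ B ∧ y ∈ A)

/-- `G` is bistable bipartite w.r.t. bipartition `{A, B}`:
`A` and `B` are its only maximum stable sets. -/
def BistableBipartite {V : Type*} (G : SimpleGraph V) (A B : Set V) : Prop :=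
  IsBipartition G A B ∧ ∀ S : Set V, IsMaxStableSet G S ↔ S = A ∨ S = B

/-- `G` has a perfect matching. -/
def HasPerfectMatching {V : Type*} (G : SimpleGraph V) : Prop :=
  ∃ M : G.Subgraph, M.IsPerfectMatching

/-- `X` has a `k` by `n - k` zero submatrix for some `1 ≤ k ≤ n - 1`. -/
def HasZeroSubmatrix {m : Type*} [Fintype m] (X : Matrix m m ℕ) : Prop :=
  ∃ R C : Finset m, R.Nonempty ∧ C.Nonempty ∧ R.card + C.card = Fintype.card m ∧
    ∀ i ∈ R, ∀ j ∈ C, X i j = 0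

/-- A square matrix is partly decomposable. -/
def PartlyDecomposable {m : Type*} [Fintype m] (X : Matrix m m ℕ) : Prop :=
  (Fintype.card m = 1 ∧ ∀ i j, X i j = 0) ∨ HasZeroSubmatrix X

/-- A square matrix is fully indecomposable iff it is not partly decomposable. -/
def FullyIndecomposable {m : Type*} [Fintype m] (X : Matrix m m ℕ) : Prop :=
  ¬ PartlyDecomposable X

/-- A (0,1)-matrix. -/
def ZeroOne {m k : Type*} (X : Matrix m k ℕ) : Prop :=
  ∀ i j, X i j = 0 ∨ X i j = 1

/-- The term rank: maximal number of nonzero entries, no two on a line. -/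
noncomputable def termRank {m k : Type*} [Fintype m] [Fintype k] (X : Matrix m k ℕ) : ℕ :=
  sSup {r | ∃ (f : Fin r ↪ m) (g : Fin r ↪ k), ∀ i, X (f i) (g i) ≠ 0}

/-- The permanent of a square matrix with natural entries. -/
def perm {m : Type*} [Fintype m] [DecidableEq m] (X : Matrix m m ℕ) : ℕ :=
  ∑ σ : Equiv.Perm m, ∏ i, X (σ i) i

/-- The bipartite graph whose reduced adjacency matrix is the (0,1)-matrix `X`. -/
def matGraph {ι κ : Type*} (X : Matrix ι κ ℕ) : SimpleGraph (ι ⊕ κ) :=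
  SimpleGraph.fromRel fun u v => ∃ i j, u = Sum.inl i ∧ v = Sum.inr j ∧ X i j = 1

/-! If `S ⊆ A` has neighbourhood `N(S)`, then `S ∪ (B \ N(S))` is stable, so `|N(S)| ≥ |S|`,
and equality would make it a maximum stable set other than `A` and `B` unless `S = ∅` or
`S = A`. Hence nonempty proper subsets of either side have strictly more neighbours than
elements. Since `|A| = |B| ≥ 2`, deleting an edge `xy` with `x ∈ A` costs such a set at most
the neighbour `y`, and `A` itself keeps the neighbours of `A \ {x}`, so Hall's condition survives
on both sides and `G - xy` has a perfect matching; it avoids `xy`. -/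

section

variable {V : Type*} {G : SimpleGraph V} {A B S : Set V}

lemma IsStableSet.ncard_le_stabNum [Finite V] (hS : IsStableSet G S) : S.ncard ≤ stabNum G :=
  le_csSup ⟨Nat.card V, by rintro k ⟨T, -, rfl⟩; exact Set.ncard_le_card T⟩ ⟨S, hS, rfl⟩

lemma biUnion_neighborSet_sdiff_singleton_subset_deleteEdges {x y : V} (hy : y ∉ S) :
    (⋃ a ∈ S \ {x}, G.neighborSet a) ⊆ ⋃ a ∈ S, (G.deleteEdges {s(x, y)}).neighborSet a := by
  simp only [Set.subset_def, Set.mem_iUnion, mem_neighborSet, deleteEdges_adj,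
    Set.mem_singleton_iff]
  rintro b ⟨a, ⟨haS, hax⟩, hab⟩
  refine ⟨a, haS, hab, fun he => ?_⟩
  rcases Sym2.eq_iff.mp he with ⟨rfl, -⟩ | ⟨rfl, -⟩
  exacts [hax rfl, hy haS]

lemma biUnion_neighborSet_subset_deleteEdges_insert {x y : V} (hy : y ∉ S) :
    (⋃ a ∈ S, G.neighborSet a) ⊆ insert y (⋃ a ∈ S, (G.deleteEdges {s(x, y)}).neighborSet a) := by
  simp only [Set.subset_def, Set.mem_insert_iff, Set.mem_iUnion, mem_neighborSet, deleteEdges_adj,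
    Set.mem_singleton_iff]
  rintro b ⟨a, haS, hab⟩
  refine or_iff_not_imp_left.mpr fun hby => ⟨a, haS, hab, fun he => ?_⟩
  rcases Sym2.eq_iff.mp he with ⟨-, rfl⟩ | ⟨rfl, -⟩
  exacts [hby rfl, hy haS]

lemma exists_isPerfectMatching_notMem_edgeSet_of_deleteEdges {e : Sym2 V}
    {M : (G.deleteEdges {e}).Subgraph} (hM : M.IsPerfectMatching) :
    ∃ M' : G.Subgraph, M'.IsPerfectMatching ∧ e ∉ M'.edgeSet := by
  refine ⟨G.toSubgraph M.spanningCoe (M.spanningCoe_le.trans (deleteEdges_le _)),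
    (Subgraph.IsPerfectMatching.toSubgraph_iff _).mpr hM, fun he => ?_⟩
  induction e using Sym2.ind with
  | _ u v => exact (deleteEdges_adj.mp (M.adj_sub (Subgraph.mem_edgeSet.mp he))).2 rfl

namespace IsBipartition

lemma isBipartiteWith (h : IsBipartition G A B) : G.IsBipartiteWith A B := ⟨h.1, h.2.2⟩

lemma symm (h : IsBipartition G A B) : IsBipartition G B A :=
  ⟨h.1.symm, Set.union_comm B A ▸ h.2.1, fun _ _ hxy => (h.2.2 hxy).symm⟩

lemma ncard_add_ncard [Finite V] (h : IsBipartition G A B) : A.ncard + B.ncard = Nat.card V := by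
  rw [← Set.ncard_union_eq h.1, h.2.1, Set.ncard_univ]

lemma deleteEdges (h : IsBipartition G A B) (s : Set (Sym2 V)) :
    IsBipartition (G.deleteEdges s) A B :=
  ⟨h.1, h.2.1, fun _ _ hxy => h.2.2 (deleteEdges_adj.mp hxy).1⟩

lemma neighbors_subset (h : IsBipartition G A B) (hS : S ⊆ A) :
    (⋃ a ∈ S, G.neighborSet a) ⊆ B :=
  Set.iUnion₂_subset fun _ ha => isBipartiteWith_neighborSet_subset h.isBipartiteWith (hS ha)

lemma isStableSet_left (h : IsBipartition G A B) : IsStableSet G A := fun _ hx _ hy _ hxy =>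
  (h.2.2 hxy).elim (fun hxy' => h.1.notMem_of_mem_left hy hxy'.2)
    (fun hxy' => h.1.notMem_of_mem_left hx hxy'.1)

lemma isStableSet_union_sdiff_neighbors (h : IsBipartition G A B) (hS : S ⊆ A) :
    IsStableSet G (S ∪ (B \ ⋃ a ∈ S, G.neighborSet a)) := by
  rintro x (hx | hx) y (hy | hy) hne hxy
  · exact h.isStableSet_left (hS hx) (hS hy) hne hxy
  · exact hy.2 (Set.mem_biUnion hx hxy)
  · exact hx.2 (Set.mem_biUnion hy hxy.symm)
  · exact h.symm.isStableSet_left hx.1 hy.1 hne hxy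

lemma ncard_union_sdiff_neighbors_add [Finite V] (h : IsBipartition G A B) (hS : S ⊆ A) :
    (S ∪ (B \ ⋃ a ∈ S, G.neighborSet a)).ncard + (⋃ a ∈ S, G.neighborSet a).ncard =
      S.ncard + B.ncard := by
  rw [Set.ncard_union_eq (h.1.mono hS Set.sdiff_subset), add_assoc,
    Set.ncard_sdiff_add_ncard_of_subset (h.neighbors_subset hS)]

lemma ncard_le_ncard_neighbors [Finite V] (h : IsBipartition G A B)
    (hA : ∀ S ⊆ A, S.ncard ≤ (⋃ a ∈ S, G.neighborSet a).ncard)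
    (hB : ∀ S ⊆ B, S.ncard ≤ (⋃ b ∈ S, G.neighborSet b).ncard) (s : Set V) :
    s.ncard ≤ (⋃ v ∈ s, G.neighborSet v).ncard := by
  have hs : s = s ∩ A ∪ s ∩ B := by rw [← Set.inter_union_distrib_left, h.2.1, Set.inter_univ]
  have hdisj : Disjoint (⋃ a ∈ s ∩ A, G.neighborSet a) (⋃ b ∈ s ∩ B, G.neighborSet b) :=
    h.1.symm.mono (h.neighbors_subset Set.inter_subset_right)
      (h.symm.neighbors_subset Set.inter_subset_right)
  calc s.ncard = (s ∩ A).ncard + (s ∩ B).ncard := by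
        rw [← Set.ncard_union_eq (h.1.mono Set.inter_subset_right Set.inter_subset_right), ← hs]
    _ ≤ (⋃ a ∈ s ∩ A, G.neighborSet a).ncard + (⋃ b ∈ s ∩ B, G.neighborSet b).ncard :=
        add_le_add (hA _ Set.inter_subset_right) (hB _ Set.inter_subset_right)
    _ = ((⋃ a ∈ s ∩ A, G.neighborSet a) ∪ ⋃ b ∈ s ∩ B, G.neighborSet b).ncard :=
        (Set.ncard_union_eq hdisj).symm
    _ ≤ (⋃ v ∈ s, G.neighborSet v).ncard := by
        refine Set.ncard_le_ncard (Set.union_subset ?_ ?_) <;>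
          exact Set.biUnion_subset_biUnion_left Set.inter_subset_left

end IsBipartition

namespace BistableBipartite

lemma symm (h : BistableBipartite G A B) : BistableBipartite G B A :=
  ⟨h.1.symm, fun S => (h.2 S).trans or_comm⟩

lemma ncard_left (h : BistableBipartite G A B) : A.ncard = stabNum G :=
  ((h.2 A).mpr (Or.inl rfl)).2

lemma ncard_eq (h : BistableBipartite G A B) : A.ncard = B.ncard :=
  h.ncard_left.trans h.symm.ncard_left.symm

lemma ncard_le_ncard_neighbors [Finite V] (h : BistableBipartite G A B) (hS : S ⊆ A) :
    S.ncard ≤ (⋃ a ∈ S, G.neighborSet a).ncard := by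
  have := h.1.ncard_union_sdiff_neighbors_add hS
  have := (h.1.isStableSet_union_sdiff_neighbors hS).ncard_le_stabNum
  have := h.symm.ncard_left
  omega

lemma ncard_lt_ncard_neighbors [Finite V] (h : BistableBipartite G A B) (hS : S ⊆ A)
    (hne : S.Nonempty) (hSA : S ≠ A) : S.ncard < (⋃ a ∈ S, G.neighborSet a).ncard := by
  refine (h.ncard_le_ncard_neighbors hS).lt_of_ne fun heq => ?_
  have hT : IsMaxStableSet G (S ∪ (B \ ⋃ a ∈ S, G.neighborSet a)) := by
    refine ⟨h.1.isStableSet_union_sdiff_neighbors hS, ?_⟩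
    have := h.1.ncard_union_sdiff_neighbors_add hS
    have := h.symm.ncard_left
    omega
  rcases (h.2 _).mp hT with hTA | hTB
  · refine hSA (hS.antisymm fun a ha => ?_)
    rcases hTA.symm ▸ ha with haS | haB
    · exact haS
    · exact (h.1.1.notMem_of_mem_left ha haB.1).elim
  · obtain ⟨a, ha⟩ := hne
    exact h.1.1.notMem_of_mem_left (hS ha) (hTB ▸ Or.inl ha)

lemma ncard_le_ncard_neighbors_deleteEdges [Finite V] (h : BistableBipartite G A B)
    (hA : 2 ≤ A.ncard) {x y : V} (hx : x ∈ A) (hy : y ∈ B) (hS : S ⊆ A) :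
    S.ncard ≤ (⋃ a ∈ S, (G.deleteEdges {s(x, y)}).neighborSet a).ncard := by
  have hyS : y ∉ S := fun hyS => h.1.1.notMem_of_mem_left (hS hyS) hy
  by_cases hSA : S = A
  · rw [hSA] at hyS ⊢
    have hsub := biUnion_neighborSet_sdiff_singleton_subset_deleteEdges (G := G) (x := x) hyS
    have hne : (A \ {x}).Nonempty := by
      rw [← Set.ncard_pos, Set.ncard_sdiff_singleton_of_mem hx]
      omega
    calc A.ncard = (A \ {x}).ncard + 1 := (Set.ncard_sdiff_singleton_add_one hx).symm
      _ ≤ (⋃ a ∈ A \ {x}, G.neighborSet a).ncard :=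
          h.ncard_lt_ncard_neighbors Set.sdiff_subset hne (Set.sdiff_singleton_ssubset.mpr hx).ne
      _ ≤ _ := Set.ncard_le_ncard hsub
  · obtain rfl | hne := S.eq_empty_or_nonempty
    · simp
    refine Nat.le_of_add_le_add_right (b := 1) ?_
    calc S.ncard + 1 ≤ (⋃ a ∈ S, G.neighborSet a).ncard := h.ncard_lt_ncard_neighbors hS hne hSA
      _ ≤ (insert y (⋃ a ∈ S, (G.deleteEdges {s(x, y)}).neighborSet a)).ncard :=
          Set.ncard_le_ncard (biUnion_neighborSet_subset_deleteEdges_insert hyS)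
      _ ≤ _ := Set.ncard_insert_le _ _

lemma hasPerfectMatching [Finite V] (h : BistableBipartite G A B) : HasPerfectMatching G := by
  classical
  have := Fintype.ofFinite V
  exact exists_isPerfectMatching_of_forall_ncard_le h.1.isBipartiteWith
    (h.1.ncard_le_ncard_neighbors (fun _ => h.ncard_le_ncard_neighbors)
      (fun _ => h.symm.ncard_le_ncard_neighbors))

lemma exists_isPerfectMatching_deleteEdges [Finite V] (h : BistableBipartite G A B)
    (hA : 2 ≤ A.ncard) {x y : V} (hx : x ∈ A) (hy : y ∈ B) :
    ∃ M : (G.deleteEdges {s(x, y)}).Subgraph, M.IsPerfectMatching := by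
  classical
  have := Fintype.ofFinite V
  have hB : 2 ≤ B.ncard := h.ncard_eq ▸ hA
  refine exists_isPerfectMatching_of_forall_ncard_le (h.1.deleteEdges _).isBipartiteWith
    ((h.1.deleteEdges _).ncard_le_ncard_neighbors
      (fun _ => h.ncard_le_ncard_neighbors_deleteEdges hA hx hy) fun S hS => ?_)
  rw [Sym2.eq_swap]
  exact h.symm.ncard_le_ncard_neighbors_deleteEdges hB hy hx hS

lemma exists_isPerfectMatching_notMem_edgeSet [Finite V] (h : BistableBipartite G A B)
    (hA : 2 ≤ A.ncard) {e : Sym2 V} (he : e ∈ G.edgeSet) :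
    ∃ M : G.Subgraph, M.IsPerfectMatching ∧ e ∉ M.edgeSet := by
  induction e using Sym2.ind with
  | _ x y =>
    rcases h.1.2.2 he with ⟨hx, hy⟩ | ⟨hx, hy⟩
    · obtain ⟨M, hM⟩ := h.exists_isPerfectMatching_deleteEdges hA hx hy
      exact exists_isPerfectMatching_notMem_edgeSet_of_deleteEdges hM
    · obtain ⟨M, hM⟩ := h.symm.exists_isPerfectMatching_deleteEdges (h.ncard_eq ▸ hA) hx hy
      exact exists_isPerfectMatching_notMem_edgeSet_of_deleteEdges hM

end BistableBipartite

end

/-- If `G` is a bistable bipartite graph with at least `4` vertices, then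
the intersection of (the edge sets of) all perfect matchings of `G` is empty. -/
theorem stmt_5 {V : Type*} [Fintype V] (G : SimpleGraph V) (A B : Set V)
    (hcard : 4 ≤ Fintype.card V) (hbis : BistableBipartite G A B) :
    (⋂ M ∈ {M : G.Subgraph | M.IsPerfectMatching}, M.edgeSet) = ∅ := by
  have hA : 2 ≤ A.ncard := by
    have := hbis.1.ncard_add_ncard
    have := hbis.ncard_eq
    rw [Nat.card_eq_fintype_card] at *
    omega
  obtain ⟨M₀, hM₀⟩ := hbis.hasPerfectMatching
  refine Set.eq_empty_of_forall_notMem fun e he => ?_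
  rw [Set.mem_iInter₂] at he
  obtain ⟨M, hM, heM⟩ :=
    hbis.exists_isPerfectMatching_notMem_edgeSet hA (M₀.edgeSet_subset (he M₀ hM₀))
  exact heM (he M hM)
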